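/- Let 0 < R ≤ ∞ and let φ be a quasiconcave function on [0,R). Then there exists a constant C > 0 such that sup_{0<t<R} φ(t) · (S_φ f)**(t) ≤ C · sup_{0<t<R} φ(t) f**(t) for every nonnegative nonincreasing measurable function f on (0,R) if and only if φ satisfies the B-condition. (This is the statement that S_φ : M_φ → M_φ is bounded if and only if φ ∈ B.) -/

import Mathlib

/-!
For nonincreasing `f` one has `f ≤ f**`, so `φ f ≤ ‖f‖_{M_φ}` pointwise and hence
`S_φ f ≤ ‖f‖_{M_φ} / φ`; integrating over `(0, t)` and applying the `B`-condition bounds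
`φ(t) (S_φ f)**(t)` by `C ‖f‖_{M_φ}`.

Conversely, test the bound on `f = 𝟙_{(0, x]}`. Quasiconcavity gives `‖f‖_{M_φ} ≤ φ(x)`, while
`S_φ f ≥ φ(x)/φ` on `(x, t)`, so `φ(x) ∫ₓᵗ ds/φ(s) ≤ C φ(x) t/φ(t)`. Cancel `φ(x)` and let `x → 0`.
-/

open MeasureTheory Set ENNReal Filter

noncomputable section

/-- The open interval `(0, R)` inside `ℝ`, where `R ∈ (0, ∞]` is an extended real. -/
def DomIoo (R : ℝ≥0∞) : Set ℝ := {t : ℝ | 0 < t ∧ ENNReal.ofReal t < R}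

/-- The part of `(0, R)` lying strictly above `t`. -/
def DomAbove (R : ℝ≥0∞) (t : ℝ) : Set ℝ := {s : ℝ | t < s ∧ ENNReal.ofReal s < R}

/-- `φ : [0, R) → [0, ∞)` is quasiconcave: it vanishes exactly at `0`, is nondecreasing,
and `t ↦ φ(t)/t` is nonincreasing on `(0, R)`.  (Values on `(0, R)` are finite.) -/
def QuasiConcaveOn (R : ℝ≥0∞) (φ : ℝ → ℝ≥0∞) : Prop :=
  φ 0 = 0 ∧
  (∀ t ∈ DomIoo R, 0 < φ t ∧ φ t < ⊤) ∧
  (∀ s t : ℝ, 0 ≤ s → s ≤ t → t ∈ DomIoo R → φ s ≤ φ t) ∧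
  (∀ s t : ℝ, s ∈ DomIoo R → s ≤ t → t ∈ DomIoo R →
    φ t / ENNReal.ofReal t ≤ φ s / ENNReal.ofReal s)

/-- `f` is a nonnegative nonincreasing measurable function on `(0, R)`
(nonnegativity is built into the codomain `[0, ∞]`). -/
def NonincOn (R : ℝ≥0∞) (f : ℝ → ℝ≥0∞) : Prop :=
  Measurable f ∧ ∀ s t : ℝ, s ∈ DomIoo R → s ≤ t → t ∈ DomIoo R → f t ≤ f s

/-- The level function `f**(t) = (1/t) ∫₀ᵗ f(s) ds`. -/
def dstar (f : ℝ → ℝ≥0∞) (t : ℝ) : ℝ≥0∞ :=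
  (∫⁻ s in Ioo (0 : ℝ) t, f s) / ENNReal.ofReal t

/-- The supremum operator `S_φ f(t) = (1/φ(t)) ⋅ sup_{0<s<t} φ(s) f(s)`. -/
def Ssup (φ f : ℝ → ℝ≥0∞) (t : ℝ) : ℝ≥0∞ :=
  (⨆ s ∈ Ioo (0 : ℝ) t, φ s * f s) / φ t

/-- The supremum operator `T_ψ f(t) = (1/ψ(t)) ⋅ sup_{t<s<R} ψ(s) f(s)`. -/
def Tsup (R : ℝ≥0∞) (ψ f : ℝ → ℝ≥0∞) (t : ℝ) : ℝ≥0∞ :=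
  (⨆ s ∈ DomAbove R t, ψ s * f s) / ψ t

/-- The `B`-condition: `∫₀ᵗ ds/φ(s) ≤ C ⋅ t/φ(t)` on `(0, R)` for some constant `C > 0`. -/
def BCond (R : ℝ≥0∞) (φ : ℝ → ℝ≥0∞) : Prop :=
  ∃ C : ℝ, 0 < C ∧ ∀ t ∈ DomIoo R,
    (∫⁻ s in Ioo (0 : ℝ) t, 1 / φ s) ≤ ENNReal.ofReal C * (ENNReal.ofReal t / φ t)

/-- A weight on `(0, R)`: positive, measurable and locally integrable
(with finite integral near the origin). -/
def IsWeight (R : ℝ≥0∞) (w : ℝ → ℝ≥0∞) : Prop :=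
  Measurable w ∧ (∀ t ∈ DomIoo R, 0 < w t ∧ w t < ⊤) ∧
  ∀ t ∈ DomIoo R, (∫⁻ s in Ioo (0 : ℝ) t, w s) < ⊤

/-- Nontriviality of a weight `w` for the exponent `p`:
`∫₁^∞ s^{-p} w(s) ds < ∞` when `R = ∞`, and `∫₀ᴿ s^{-p} w(s) ds = ∞` when `R < ∞`. -/
def Nontriv (R : ℝ≥0∞) (p : ℝ) (w : ℝ → ℝ≥0∞) : Prop :=
  (R = ⊤ → (∫⁻ s in Ioi (1 : ℝ), ENNReal.ofReal s ^ (-p) * w s) < ⊤) ∧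
  (R ≠ ⊤ → (∫⁻ s in DomIoo R, ENNReal.ofReal s ^ (-p) * w s) = ⊤)

theorem ENNReal.mul_div_le_iff_le_mul_div {a b c d : ℝ≥0∞} (ha₀ : a ≠ 0) (ha : a ≠ ∞)
    (hb₀ : b ≠ 0) (hb : b ≠ ∞) : a * (c / b) ≤ d ↔ c ≤ d * (b / a) := by
  rw [mul_comm, ← ENNReal.le_div_iff_mul_le (Or.inl ha₀) (Or.inl ha), ENNReal.div_le_iff hb₀ hb,
    div_eq_mul_inv, div_eq_mul_inv, mul_assoc, mul_comm a⁻¹]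

theorem setLIntegral_Ioo_le_of_forall_Ioo_le {a b : ℝ} {g : ℝ → ℝ≥0∞} {M : ℝ≥0∞}
    (h : ∀ x, a < x → ∫⁻ s in Ioo x b, g s ≤ M) : ∫⁻ s in Ioo a b, g s ≤ M := by
  set I : ℕ → Set ℝ := fun n => Ioo (a + 1 / (n + 1)) b
  have hI : Monotone I := fun m n hmn => Ioo_subset_Ioo_left (by gcongr)
  have hU : ⋃ n, I n = Ioo a b := by
    refine Subset.antisymm (iUnion_subset fun n => Ioo_subset_Ioo_left (by simp; positivity))
      fun s hs => ?_
    obtain ⟨n, hn⟩ := exists_nat_one_div_lt (sub_pos.2 hs.1)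
    exact mem_iUnion.2 ⟨n, by linarith, hs.2⟩
  rw [← withDensity_apply', ← hU, hI.measure_iUnion]
  exact iSup_le fun n => (withDensity_apply' _ _).trans_le (h _ (by simp; positivity))

section Marcinkiewicz

variable {R : ℝ≥0∞} {φ f g : ℝ → ℝ≥0∞} {s t x : ℝ}

def marcinkiewiczNorm (R : ℝ≥0∞) (φ g : ℝ → ℝ≥0∞) : ℝ≥0∞ :=
  ⨆ t ∈ DomIoo R, φ t * dstar g t

theorem Ioo_subset_domIoo (ht : t ∈ DomIoo R) : Ioo 0 t ⊆ DomIoo R :=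
  fun _ hs => ⟨hs.1, (ENNReal.ofReal_le_ofReal hs.2.le).trans_lt ht.2⟩

theorem mul_dstar_le_marcinkiewiczNorm (ht : t ∈ DomIoo R) :
    φ t * dstar g t ≤ marcinkiewiczNorm R φ g :=
  le_iSup₂ (f := fun t _ => φ t * dstar g t) t ht

theorem NonincOn.le_dstar (hf : NonincOn R f) (hs : s ∈ DomIoo R) : f s ≤ dstar f s := by
  have hs₀ : ENNReal.ofReal s ≠ 0 := (ENNReal.ofReal_pos.2 hs.1).ne'
  rw [dstar, ENNReal.le_div_iff_mul_le (Or.inl hs₀) (Or.inl ofReal_ne_top)]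
  calc f s * ENNReal.ofReal s = ∫⁻ _ in Ioo 0 s, f s := by simp
    _ ≤ ∫⁻ u in Ioo 0 s, f u :=
      setLIntegral_mono hf.1 fun u hu => hf.2 u s (Ioo_subset_domIoo hs hu) hu.2.le hs

theorem NonincOn.Ssup_le_marcinkiewiczNorm_div (hf : NonincOn R f) (ht : t ∈ DomIoo R) :
    Ssup φ f t ≤ marcinkiewiczNorm R φ f / φ t := by
  refine ENNReal.div_le_div_right (iSup₂_le fun s hs => ?_) _
  have hs' := Ioo_subset_domIoo ht hs
  exact (mul_le_mul_right (hf.le_dstar hs') _).trans (mul_dstar_le_marcinkiewiczNorm hs')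

theorem nonincOn_indicator_Ioc : NonincOn R ((Ioc 0 x).indicator 1) := by
  refine ⟨measurable_const.indicator measurableSet_Ioc, fun s u hs hsu _ => ?_⟩
  by_cases hu : u ∈ Ioc 0 x
  · rw [indicator_of_mem hu, indicator_of_mem (show s ∈ Ioc 0 x from ⟨hs.1, hsu.trans hu.2⟩)]
    exact le_rfl
  · simp [indicator_of_notMem hu]

theorem dstar_indicator_Ioc_le :
    dstar ((Ioc 0 x).indicator 1) t ≤ ENNReal.ofReal (min x t) / ENNReal.ofReal t := by
  rw [dstar, lintegral_indicator_one measurableSet_Ioc, Measure.restrict_apply measurableSet_Ioc]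
  gcongr
  calc volume (Ioc 0 x ∩ Ioo 0 t) ≤ volume (Ioc 0 (min x t)) :=
        measure_mono fun s hs => ⟨hs.1.1, le_min hs.1.2 hs.2.2.le⟩
    _ = ENNReal.ofReal (min x t) := by rw [Real.volume_Ioc, sub_zero]

theorem div_le_Ssup_indicator_Ioc (hx : 0 < x) (hxs : x < s) :
    φ x / φ s ≤ Ssup φ ((Ioc 0 x).indicator 1) s := by
  refine ENNReal.div_le_div_right ?_ _
  calc φ x = φ x * (Ioc 0 x).indicator 1 x := by simp [indicator_of_mem, hx]
    _ ≤ ⨆ u ∈ Ioo 0 s, φ u * (Ioc 0 x).indicator 1 u :=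
      le_iSup₂ (f := fun u _ => φ u * (Ioc 0 x).indicator 1 u) x ⟨hx, hxs⟩

namespace QuasiConcaveOn

variable (hφ : QuasiConcaveOn R φ)
include hφ

theorem ne_zero (ht : t ∈ DomIoo R) : φ t ≠ 0 := (hφ.2.1 t ht).1.ne'

theorem ne_top (ht : t ∈ DomIoo R) : φ t ≠ ∞ := (hφ.2.1 t ht).2.ne

theorem mul_dstar_le_iff_setLIntegral_le (ht : t ∈ DomIoo R) {K : ℝ≥0∞} :
    φ t * dstar g t ≤ K ↔ ∫⁻ s in Ioo 0 t, g s ≤ K * (ENNReal.ofReal t / φ t) :=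
  ENNReal.mul_div_le_iff_le_mul_div (hφ.ne_zero ht) (hφ.ne_top ht)
    (ENNReal.ofReal_pos.2 ht.1).ne' ofReal_ne_top

theorem mul_ofReal_min_div_le (hx : x ∈ DomIoo R) (ht : t ∈ DomIoo R) :
    φ t * (ENNReal.ofReal (min x t) / ENNReal.ofReal t) ≤ φ x := by
  obtain ⟨-, -, hmono, hquot⟩ := hφ
  rcases le_total t x with htx | hxt
  · rw [min_eq_right htx, ENNReal.div_self (ENNReal.ofReal_pos.2 ht.1).ne' ofReal_ne_top,
      mul_one]
    exact hmono t x ht.1.le htx hx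
  · rw [min_eq_left hxt]
    calc φ t * (ENNReal.ofReal x / ENNReal.ofReal t)
        = φ t / ENNReal.ofReal t * ENNReal.ofReal x := by simp only [div_eq_mul_inv]; ring
      _ ≤ φ x / ENNReal.ofReal x * ENNReal.ofReal x :=
          mul_le_mul_left (hquot x t hx hxt ht) _
      _ = φ x := ENNReal.div_mul_cancel (ENNReal.ofReal_pos.2 hx.1).ne' ofReal_ne_top

theorem marcinkiewiczNorm_indicator_Ioc_le (hx : x ∈ DomIoo R) :
    marcinkiewiczNorm R φ ((Ioc 0 x).indicator 1) ≤ φ x :=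
  iSup₂_le fun _ ht =>
    (mul_le_mul_right dstar_indicator_Ioc_le _).trans (hφ.mul_ofReal_min_div_le hx ht)

theorem marcinkiewiczNorm_Ssup_le {C : ℝ} (hC : 0 < C)
    (hB : ∀ t ∈ DomIoo R, ∫⁻ s in Ioo 0 t, 1 / φ s ≤ ENNReal.ofReal C * (ENNReal.ofReal t / φ t))
    (hf : NonincOn R f) :
    marcinkiewiczNorm R φ (Ssup φ f) ≤ ENNReal.ofReal C * marcinkiewiczNorm R φ f := by
  set M := marcinkiewiczNorm R φ f
  rcases eq_or_ne M ∞ with hM | hM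
  · simp [hM, ENNReal.mul_top (ENNReal.ofReal_pos.2 hC).ne']
  refine iSup₂_le fun t ht => (hφ.mul_dstar_le_iff_setLIntegral_le ht).2 ?_
  calc ∫⁻ s in Ioo 0 t, Ssup φ f s ≤ ∫⁻ s in Ioo 0 t, M * (1 / φ s) :=
        setLIntegral_mono' measurableSet_Ioo fun s hs =>
          (hf.Ssup_le_marcinkiewiczNorm_div (Ioo_subset_domIoo ht hs)).trans_eq
            (mul_one_div _ _).symm
    _ = M * ∫⁻ s in Ioo 0 t, 1 / φ s := lintegral_const_mul' _ _ hM
    _ ≤ M * (ENNReal.ofReal C * (ENNReal.ofReal t / φ t)) := by gcongr; exact hB t ht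
    _ = ENNReal.ofReal C * M * (ENNReal.ofReal t / φ t) := by ring

theorem setLIntegral_one_div_le_of_bounded {C : ℝ}
    (hbd : ∀ f, NonincOn R f →
      marcinkiewiczNorm R φ (Ssup φ f) ≤ ENNReal.ofReal C * marcinkiewiczNorm R φ f)
    (ht : t ∈ DomIoo R) :
    ∫⁻ s in Ioo 0 t, 1 / φ s ≤ ENNReal.ofReal C * (ENNReal.ofReal t / φ t) := by
  refine setLIntegral_Ioo_le_of_forall_Ioo_le fun x hx₀ => ?_
  rcases le_or_gt t x with htx | hxt
  · simp [Ioo_eq_empty_of_le htx]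
  have hx : x ∈ DomIoo R := Ioo_subset_domIoo ht ⟨hx₀, hxt⟩
  set f := (Ioc 0 x).indicator (1 : ℝ → ℝ≥0∞)
  have hlower : φ x * ∫⁻ s in Ioo x t, 1 / φ s ≤ ∫⁻ s in Ioo 0 t, Ssup φ f s :=
    calc φ x * ∫⁻ s in Ioo x t, 1 / φ s = ∫⁻ s in Ioo x t, φ x / φ s := by
          rw [← lintegral_const_mul' _ _ (hφ.ne_top hx)]; simp only [mul_one_div]
      _ ≤ ∫⁻ s in Ioo x t, Ssup φ f s :=
          setLIntegral_mono' measurableSet_Ioo fun s hs => div_le_Ssup_indicator_Ioc hx₀ hs.1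
      _ ≤ ∫⁻ s in Ioo 0 t, Ssup φ f s := lintegral_mono_set (Ioo_subset_Ioo_left hx₀.le)
  have hupper : ∫⁻ s in Ioo 0 t, Ssup φ f s ≤ ENNReal.ofReal C * φ x * (ENNReal.ofReal t / φ t) :=
    (hφ.mul_dstar_le_iff_setLIntegral_le ht).1 <| (mul_dstar_le_marcinkiewiczNorm ht).trans <|
      (hbd f nonincOn_indicator_Ioc).trans
        (by gcongr; exact hφ.marcinkiewiczNorm_indicator_Ioc_le hx)
  refine (ENNReal.mul_le_mul_iff_right (hφ.ne_zero hx) (hφ.ne_top hx)).1 ?_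
  calc φ x * ∫⁻ s in Ioo x t, 1 / φ s ≤ ENNReal.ofReal C * φ x * (ENNReal.ofReal t / φ t) :=
        hlower.trans hupper
    _ = φ x * (ENNReal.ofReal C * (ENNReal.ofReal t / φ t)) := by ring

end QuasiConcaveOn

end Marcinkiewicz

theorem statement5_general (R : ℝ≥0∞) (φ : ℝ → ℝ≥0∞)
    (hφ : QuasiConcaveOn R φ) :
    (∃ C : ℝ, 0 < C ∧ ∀ f : ℝ → ℝ≥0∞, NonincOn R f →
        (⨆ t ∈ DomIoo R, φ t * dstar (Ssup φ f) t) ≤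
          ENNReal.ofReal C * ⨆ t ∈ DomIoo R, φ t * dstar f t) ↔
      BCond R φ :=
  ⟨fun ⟨C, hC, hbd⟩ => ⟨C, hC, fun _ ht => hφ.setLIntegral_one_div_le_of_bounded hbd ht⟩,
    fun ⟨C, hC, hB⟩ => ⟨C, hC, fun _ hf => hφ.marcinkiewiczNorm_Ssup_le hC hB hf⟩⟩

/-- `S_φ : M_φ → M_φ` is bounded if and only if `φ ∈ B`. -/
theorem statement5 (R : ℝ≥0∞) (hR : 0 < R) (φ : ℝ → ℝ≥0∞)
    (hφ : QuasiConcaveOn R φ) :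
    (∃ C : ℝ, 0 < C ∧ ∀ f : ℝ → ℝ≥0∞, NonincOn R f →
        (⨆ t ∈ DomIoo R, φ t * dstar (Ssup φ f) t) ≤
          ENNReal.ofReal C * ⨆ t ∈ DomIoo R, φ t * dstar f t) ↔
      BCond R φ :=
  statement5_general R φ hφ
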